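/- Let k ≥ 12 be an even integer with k ≡ 2 mod 4, write k = 12m + s with s ∈ {0,4,6,8,10,14}, and define α_j = (1/2 + 2j/k)π for 1 ≤ j ≤ m and β_j = (1/2 + 2j/(k+12))π for 1 ≤ j ≤ m+1. Then min over 1 ≤ j ≤ m of min(α_j − β_j, β_{j+1} − α_j) ≥ 12π/(k(k+12)). -/
import Mathlib


open Real

theorem stmt4 (k m s : ℕ) (hk : 12 ≤ k) (h4 : k % 4 = 2)
    (hs : s ∈ ({0,4,6,8,10,14} : Set ℕ)) (hks : k = 12*m + s)
    (α β : ℕ → ℝ)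
    (hα : ∀ j, α j = (1/2 + 2*(j:ℝ)/k) * π)
    (hβ : ∀ j, β j = (1/2 + 2*(j:ℝ)/((k:ℝ)+12)) * π) :
    ∀ j, 1 ≤ j → j ≤ m →
      min (α j - β j) (β (j+1) - α j) ≥ 12*π/((k:ℝ)*((k:ℝ)+12)) := by
  intro j hj1 hjm
  have hs6 : 6 ≤ s := by
    simp only [Set.mem_insert_iff, Set.mem_singleton_iff] at hs
    rcases hs with h | h | h | h | h | h <;> omega
  have hjk : 12 * j + 6 ≤ k := by omega
  have hkR : (0:ℝ) < (k:ℝ) := by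
    have : (12:ℝ) ≤ (k:ℝ) := by exact_mod_cast hk
    linarith
  have hk12 : (0:ℝ) < (k:ℝ) + 12 := by linarith
  have hjR : (1:ℝ) ≤ (j:ℝ) := by exact_mod_cast hj1
  have hjkR : 12 * (j:ℝ) + 6 ≤ (k:ℝ) := by exact_mod_cast hjk
  have hπ := pi_pos
  rw [hα, hβ, hβ, ge_iff_le, le_min_iff]
  constructor
  · have e1 : (1/2 + 2*(j:ℝ)/k) * π - (1/2 + 2*(j:ℝ)/((k:ℝ)+12)) * π
        = 24*(j:ℝ)*π/((k:ℝ)*((k:ℝ)+12)) := by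
      field_simp
      ring
    rw [e1]
    gcongr
    nlinarith
  · have e2 : (1/2 + 2*((j+1:ℕ):ℝ)/((k:ℝ)+12)) * π - (1/2 + 2*(j:ℝ)/k) * π
        = (2*(k:ℝ) - 24*(j:ℝ))*π/((k:ℝ)*((k:ℝ)+12)) := by
      push_cast
      field_simp
      ring
    rw [e2]
    gcongr
    nlinarith
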